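/- Suppose Q is in rational normal form with parameters z and k_1,…,k_d, and γ is generic. Let α be a normalized 2-cocycle on g(γ,Q) and write α(m)=α(L_m,L_{−m}). Then for every m∈ℤ^d∖R, α(m)=((γ|m)/(γ|e_1))·σ(m,−m)·α(e_1). -/

import Mathlib

/-!
Put β(x) = σ(x,x) α(L_x, L_{-x}). The cocycle identity on (r, s, -(r+s)) with
σ(r,s) ≠ σ(s,r) reads β(r+s) = β(r) + β(s), and on (r, t, -(r+t)) with t ∈ R it reads
(γ|r) β(r+t) = (γ|r+t) β(r). Writing the first identity at r and at r + k₁e₁ and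
subtracting, the second one shows that β(x)/(γ|x) agrees on any two non-commuting x, y.
In rational normal form every m ∉ R is joined to e₁ by at most two such steps (through
an element whose second coordinate is 1), and β(e₁) = α(e₁).
-/

open scoped BigOperators

namespace QTorus

/-- σ(m,n) = ∏_{i<j} q_{ji}^{m_j n_i}. -/
noncomputable def qsigma (d : ℕ) (Q : Matrix (Fin d) (Fin d) ℂ) (m n : Fin d → ℤ) : ℂ :=
  ∏ i : Fin d, ∏ j : Fin d, if i < j then Q j i ^ (m j * n i) else 1

/-- The radical subgroup R = {m | σ(m,n)=σ(n,m) for all n}. -/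
def Rset (d : ℕ) (Q : Matrix (Fin d) (Fin d) ℂ) : Set (Fin d → ℤ) :=
  {m | ∀ n : Fin d → ℤ, qsigma d Q m n = qsigma d Q n m}

/-- (γ|m) = ∑ γ_i m_i. -/
noncomputable def ip (d : ℕ) (γ : Fin d → ℂ) (m : Fin d → ℤ) : ℂ :=
  ∑ i : Fin d, γ i * (m i : ℂ)

/-- The underlying vector space of g(γ,Q): formal ℂ-linear combinations of basis
vectors indexed by ℤ^d. -/
abbrev g (d : ℕ) := (Fin d → ℤ) →₀ ℂ

/-- The basis vector L_m. -/
noncomputable def L (d : ℕ) (m : Fin d → ℤ) : g d := Finsupp.single m 1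

/-- Hypotheses on the matrix Q: nonzero entries, q_{ii}=1, q_{ij}q_{ji}=1. -/
def QOk (d : ℕ) (Q : Matrix (Fin d) (Fin d) ℂ) : Prop :=
  (∀ i, Q i i = 1) ∧ (∀ i j, Q i j * Q j i = 1) ∧ (∀ i j, Q i j ≠ 0)

/-- γ is generic: γ_1,…,γ_d are linearly independent over ℚ. -/
def Generic (d : ℕ) (γ : Fin d → ℂ) : Prop := LinearIndependent ℚ γ

open Classical in
/-- Structure constants of g(γ,Q): [L_m, L_n] = sc(m,n) • L_{m+n}. -/
noncomputable def sc (d : ℕ) (Q : Matrix (Fin d) (Fin d) ℂ) (γ : Fin d → ℂ)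
    (m n : Fin d → ℤ) : ℂ :=
  if m ∈ Rset d Q then
    (if n ∈ Rset d Q then qsigma d Q m n * ip d γ (n - m)
     else qsigma d Q m n * ip d γ n)
  else
    (if n ∈ Rset d Q then -(qsigma d Q n m * ip d γ m)
     else qsigma d Q m n - qsigma d Q n m)

/-- The bracket of g(γ,Q), as the bilinear extension of
[L_m, L_n] = sc(m,n) • L_{m+n}. -/
noncomputable def br (d : ℕ) (Q : Matrix (Fin d) (Fin d) ℂ) (γ : Fin d → ℂ)
    (x y : g d) : g d :=
  x.sum fun m a => y.sum fun n b => Finsupp.single (m + n) (a * b * sc d Q γ m n)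

/-- A Lie algebra automorphism of g(γ,Q): a linear equivalence preserving the bracket. -/
def IsAut (d : ℕ) (Q : Matrix (Fin d) (Fin d) ℂ) (γ : Fin d → ℂ)
    (θ : g d ≃ₗ[ℂ] g d) : Prop :=
  ∀ x y : g d, θ (br d Q γ x y) = br d Q γ (θ x) (θ y)

/-- A derivation of g(γ,Q). -/
def IsDer (d : ℕ) (Q : Matrix (Fin d) (Fin d) ℂ) (γ : Fin d → ℂ)
    (D : g d →ₗ[ℂ] g d) : Prop :=
  ∀ x y : g d, D (br d Q γ x y) = br d Q γ (D x) y + br d Q γ x (D y)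

open Classical in
/-- δ(n,R) = 1 if n ∈ R, 0 otherwise. -/
noncomputable def deltaR (d : ℕ) (Q : Matrix (Fin d) (Fin d) ℂ) (n : Fin d → ℤ) : ℕ :=
  if n ∈ Rset d Q then 1 else 0

/-- A 2-cocycle on g(γ,Q). -/
def IsCocycle (d : ℕ) (Q : Matrix (Fin d) (Fin d) ℂ) (γ : Fin d → ℂ)
    (α : g d →ₗ[ℂ] g d →ₗ[ℂ] ℂ) : Prop :=
  (∀ x y : g d, α x y = - α y x) ∧
  (∀ x y z : g d,
    α (br d Q γ x y) z + α (br d Q γ z x) y + α (br d Q γ y z) x = 0)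

/-- i ↔ j is one of the exceptional index pairs (2l-1,2l) (1-based) of the rational
normal form. Here indices are 0-based. -/
def OffDiagPair (z : ℕ) (i j : ℕ) : Prop :=
  ∃ l : ℕ, l < z ∧ ((i = 2 * l ∧ j = 2 * l + 1) ∨ (i = 2 * l + 1 ∧ j = 2 * l))

/-- Q is in rational normal form with parameters z and k_1,…,k_d (0-based indexing:
the paper's pair (2i-1,2i) is the Lean pair (2l, 2l+1) with l = i-1). -/
def IsRNF (d : ℕ) (Q : Matrix (Fin d) (Fin d) ℂ) (z : ℕ) (k : Fin d → ℕ) : Prop :=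
  0 < z ∧ 2 * z ≤ d ∧
  (∀ i j : Fin d, ¬ OffDiagPair z i.val j.val → Q i j = 1) ∧
  (∀ (l : ℕ) (_ : l < z) (hi : 2 * l < d) (hj : 2 * l + 1 < d),
      IsPrimitiveRoot (Q ⟨2 * l, hi⟩ ⟨2 * l + 1, hj⟩) (k ⟨2 * l, hi⟩) ∧
      Q ⟨2 * l + 1, hj⟩ ⟨2 * l, hi⟩ = (Q ⟨2 * l, hi⟩ ⟨2 * l + 1, hj⟩)⁻¹ ∧
      k ⟨2 * l + 1, hj⟩ = k ⟨2 * l, hi⟩ ∧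
      1 < k ⟨2 * l, hi⟩) ∧
  (∀ (i : ℕ) (_ : i + 1 < 2 * z) (h1 : i < d) (h2 : i + 1 < d),
      k ⟨i + 1, h2⟩ ∣ k ⟨i, h1⟩) ∧
  (∀ i : Fin d, 2 * z ≤ i.val → k i = 1)

/-- The vector k_1 e_1 ∈ ℤ^d. -/
noncomputable def k1e1 (d : ℕ) (k : Fin d → ℕ) (hd : 0 < d) : Fin d → ℤ :=
  Pi.single ⟨0, hd⟩ (k ⟨0, hd⟩ : ℤ)

/-- A 2-cocycle is normalized if α(L_{m-k₁e₁}, L_{k₁e₁})=0 for m ∈ R, m ≠ 2k₁e₁,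
α(L_0, L_{2k₁e₁})=0, α(L_0, L_s)=0 for s ∉ R, and α(L_m,L_n)=0 whenever m+n ≠ 0. -/
def IsNormalized (d : ℕ) (Q : Matrix (Fin d) (Fin d) ℂ) (k : Fin d → ℕ) (hd : 0 < d)
    (α : g d →ₗ[ℂ] g d →ₗ[ℂ] ℂ) : Prop :=
  (∀ m ∈ Rset d Q, m ≠ 2 • k1e1 d k hd →
      α (L d (m - k1e1 d k hd)) (L d (k1e1 d k hd)) = 0) ∧
  α (L d 0) (L d (2 • k1e1 d k hd)) = 0 ∧
  (∀ s, s ∉ Rset d Q → α (L d 0) (L d s) = 0) ∧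
  (∀ m n : Fin d → ℤ, m + n ≠ 0 → α (L d m) (L d n) = 0)

/-- The degree derivation ∂_i, acting by ∂_i(L_m) = m_i L_m. -/
noncomputable def deg (d : ℕ) (i : Fin d) (y : g d) : g d :=
  y.sum fun m a => Finsupp.single m ((m i : ℂ) * a)

open Classical in
/-- The 2-cocycle α₁: α₁(L_m,L_n) = δ_{m+n,0}((m_γ)³-m_γ)/12 for m ∈ R, 0 otherwise,
where m_γ = (γ|m)/(γ|k₁e₁). -/
noncomputable def alpha1 (d : ℕ) (Q : Matrix (Fin d) (Fin d) ℂ) (γ : Fin d → ℂ)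
    (k : Fin d → ℕ) (hd : 0 < d) (x y : g d) : ℂ :=
  x.sum fun m a => y.sum fun n b => a * b *
    (if m ∈ Rset d Q ∧ m + n = 0 then
       ((ip d γ m / ip d γ (k1e1 d k hd)) ^ 3 - ip d γ m / ip d γ (k1e1 d k hd)) / 12
     else 0)

open Classical in
/-- The 2-cocycle α₂: α₂(L_r,L_s) = δ_{r+s,0} σ(r,-r)(γ|r)/(γ|k₁e₁) for r ∉ R,
0 otherwise. -/
noncomputable def alpha2 (d : ℕ) (Q : Matrix (Fin d) (Fin d) ℂ) (γ : Fin d → ℂ)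
    (k : Fin d → ℕ) (hd : 0 < d) (x y : g d) : ℂ :=
  x.sum fun m a => y.sum fun n b => a * b *
    (if m ∉ Rset d Q ∧ m + n = 0 then
       qsigma d Q m (-m) * (ip d γ m / ip d γ (k1e1 d k hd))
     else 0)


section Cocycle

variable {d : ℕ} {Q : Matrix (Fin d) (Fin d) ℂ}

lemma qsigma_add_left (hQ0 : ∀ i j, Q i j ≠ 0) (m m' n : Fin d → ℤ) :
    qsigma d Q (m + m') n = qsigma d Q m n * qsigma d Q m' n := by
  simp only [qsigma, ← Finset.prod_mul_distrib]
  refine Finset.prod_congr rfl fun i _ => Finset.prod_congr rfl fun j _ => ?_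
  split_ifs
  · rw [Pi.add_apply, add_mul, zpow_add₀ (hQ0 j i)]
  · rw [one_mul]

lemma qsigma_add_right (hQ0 : ∀ i j, Q i j ≠ 0) (m n n' : Fin d → ℤ) :
    qsigma d Q m (n + n') = qsigma d Q m n * qsigma d Q m n' := by
  simp only [qsigma, ← Finset.prod_mul_distrib]
  refine Finset.prod_congr rfl fun i _ => Finset.prod_congr rfl fun j _ => ?_
  split_ifs
  · rw [Pi.add_apply, mul_add, zpow_add₀ (hQ0 j i)]
  · rw [one_mul]

lemma qsigma_zero_left (n : Fin d → ℤ) : qsigma d Q 0 n = 1 := by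
  simp [qsigma]

lemma qsigma_zero_right (m : Fin d → ℤ) : qsigma d Q m 0 = 1 := by
  simp [qsigma]

lemma qsigma_neg_left (hQ0 : ∀ i j, Q i j ≠ 0) (m n : Fin d → ℤ) :
    qsigma d Q (-m) n = (qsigma d Q m n)⁻¹ := by
  refine (inv_eq_of_mul_eq_one_right ?_).symm
  rw [← qsigma_add_left hQ0, add_neg_cancel, qsigma_zero_left]

lemma qsigma_neg_right (hQ0 : ∀ i j, Q i j ≠ 0) (m n : Fin d → ℤ) :
    qsigma d Q m (-n) = (qsigma d Q m n)⁻¹ := by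
  refine (inv_eq_of_mul_eq_one_right ?_).symm
  rw [← qsigma_add_right hQ0, add_neg_cancel, qsigma_zero_right]

lemma qsigma_ne_zero (hQ0 : ∀ i j, Q i j ≠ 0) (m n : Fin d → ℤ) : qsigma d Q m n ≠ 0 :=
  Finset.prod_ne_zero_iff.2 fun i _ => Finset.prod_ne_zero_iff.2 fun j _ => by
    split_ifs
    exacts [zpow_ne_zero _ (hQ0 j i), one_ne_zero]

lemma zero_mem_Rset : (0 : Fin d → ℤ) ∈ Rset d Q := fun n => by
  rw [qsigma_zero_left, qsigma_zero_right]

lemma neg_mem_Rset_iff (hQ0 : ∀ i j, Q i j ≠ 0) {t : Fin d → ℤ} :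
    -t ∈ Rset d Q ↔ t ∈ Rset d Q := by
  have hneg {u : Fin d → ℤ} (hu : u ∈ Rset d Q) : -u ∈ Rset d Q := fun n => by
    rw [qsigma_neg_left hQ0, qsigma_neg_right hQ0, hu n]
  exact ⟨fun h => by simpa using hneg h, hneg⟩

lemma add_mem_Rset_iff (hQ0 : ∀ i j, Q i j ≠ 0) {r t : Fin d → ℤ} (ht : t ∈ Rset d Q) :
    r + t ∈ Rset d Q ↔ r ∈ Rset d Q := by
  refine ⟨fun h n => ?_, fun h n => ?_⟩
  · have := h n
    rw [qsigma_add_left hQ0, qsigma_add_right hQ0, ht n] at this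
    exact mul_right_cancel₀ (qsigma_ne_zero hQ0 n t) this
  · rw [qsigma_add_left hQ0, qsigma_add_right hQ0, h n, ht n]

lemma add_notMem_Rset_of_qsigma_ne (hQ0 : ∀ i j, Q i j ≠ 0) {r s : Fin d → ℤ}
    (h : qsigma d Q r s ≠ qsigma d Q s r) : r + s ∉ Rset d Q := fun hrs => h <| by
  have := hrs s
  rw [qsigma_add_left hQ0, qsigma_add_right hQ0] at this
  exact mul_right_cancel₀ (qsigma_ne_zero hQ0 s s) this

lemma ip_add (γ : Fin d → ℂ) (m n : Fin d → ℤ) :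
    ip d γ (m + n) = ip d γ m + ip d γ n := by
  simp only [ip, ← Finset.sum_add_distrib, Pi.add_apply, Int.cast_add, mul_add]

lemma ip_neg (γ : Fin d → ℂ) (m : Fin d → ℤ) : ip d γ (-m) = -ip d γ m := by
  simp only [ip, ← Finset.sum_neg_distrib, Pi.neg_apply, Int.cast_neg, mul_neg]

lemma ip_ne_zero {γ : Fin d → ℂ} (hγ : Generic d γ) {m : Fin d → ℤ} (hm : m ≠ 0) :
    ip d γ m ≠ 0 := by
  refine fun h => hm (funext fun i => ?_)
  have hsum : ∑ i, (m i : ℚ) • γ i = 0 := by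
    rw [← h, ip]
    refine Finset.sum_congr rfl fun i _ => ?_
    rw [Rat.smul_def, Rat.cast_intCast, mul_comm]
  exact_mod_cast Fintype.linearIndependent_iff.1 hγ _ hsum i

lemma br_L (γ : Fin d → ℂ) (m n : Fin d → ℤ) :
    br d Q γ (L d m) (L d n) = sc d Q γ m n • L d (m + n) := by
  unfold br L
  rw [Finsupp.sum_single_index, Finsupp.sum_single_index]
  · rw [Finsupp.smul_single, smul_eq_mul, mul_comm, mul_one]
  · rw [one_mul, zero_mul, Finsupp.single_zero]
  · rw [Finsupp.sum_single_index] <;> simp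

variable {γ : Fin d → ℂ} {α : g d →ₗ[ℂ] g d →ₗ[ℂ] ℂ}

lemma IsCocycle.cyclic_L (hα : IsCocycle d Q γ α) (m n p : Fin d → ℤ) :
    sc d Q γ m n * α (L d (m + n)) (L d p) + sc d Q γ p m * α (L d (p + m)) (L d n)
      + sc d Q γ n p * α (L d (n + p)) (L d m) = 0 := by
  simpa [br_L] using hα.2 (L d m) (L d n) (L d p)

variable (Q) in
noncomputable def twistedDiag (α : g d →ₗ[ℂ] g d →ₗ[ℂ] ℂ) (x : Fin d → ℤ) : ℂ :=
  qsigma d Q x x * α (L d x) (L d (-x))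

lemma IsCocycle.twistedDiag_add (hQ0 : ∀ i j, Q i j ≠ 0) (hα : IsCocycle d Q γ α)
    {r s : Fin d → ℤ} (h : qsigma d Q r s ≠ qsigma d Q s r) :
    twistedDiag Q α (r + s) = twistedDiag Q α r + twistedDiag Q α s := by
  have hr : r ∉ Rset d Q := fun hr => h (hr s)
  have hs : s ∉ Rset d Q := fun hs => h (hs r).symm
  have hrs : -(r + s) ∉ Rset d Q := by
    rw [neg_mem_Rset_iff hQ0]
    exact add_notMem_Rset_of_qsigma_ne hQ0 h
  have hcyc := hα.cyclic_L r s (-(r + s))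
  rw [show -(r + s) + r = -s by abel, show s + -(r + s) = -r by abel, hα.1 (L d (-s)),
    hα.1 (L d (-r))] at hcyc
  simp only [sc, if_neg hr, if_neg hs, if_neg hrs] at hcyc
  simp only [twistedDiag]
  generalize α (L d (r + s)) (L d (-(r + s))) = A at hcyc ⊢
  simp only [neg_add, qsigma_add_left hQ0, qsigma_add_right hQ0,
    qsigma_neg_left hQ0, qsigma_neg_right hQ0] at hcyc ⊢
  have := qsigma_ne_zero hQ0 (Q := Q) r r
  have := qsigma_ne_zero hQ0 (Q := Q) r s
  have := qsigma_ne_zero hQ0 (Q := Q) s r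
  have := qsigma_ne_zero hQ0 (Q := Q) s s
  apply mul_left_cancel₀ (sub_ne_zero.2 h)
  linear_combination (norm := skip) (qsigma d Q r r * qsigma d Q r s * qsigma d Q s r *
    qsigma d Q s s) * hcyc
  field_simp
  ring

lemma IsCocycle.ip_mul_twistedDiag_add_of_mem (hQ0 : ∀ i j, Q i j ≠ 0)
    (hα : IsCocycle d Q γ α) {r t : Fin d → ℤ} (hr : r ∉ Rset d Q) (ht : t ∈ Rset d Q) :
    ip d γ r * twistedDiag Q α (r + t) = ip d γ (r + t) * twistedDiag Q α r := by
  have hrt : -(r + t) ∉ Rset d Q := by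
    rwa [neg_mem_Rset_iff hQ0, add_mem_Rset_iff hQ0 ht]
  have hcyc := hα.cyclic_L r t (-(r + t))
  rw [show -(r + t) + r = -t by abel, show t + -(r + t) = -r by abel, hα.1 (L d (-r))] at hcyc
  have hmid : sc d Q γ (-(r + t)) r = 0 := by
    rw [sc, if_neg hrt, if_neg hr, neg_add, qsigma_add_left hQ0, qsigma_add_right hQ0,
      qsigma_neg_left hQ0, qsigma_neg_left hQ0, qsigma_neg_right hQ0, qsigma_neg_right hQ0,
      ht r, sub_self]
  rw [hmid, zero_mul, add_zero] at hcyc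
  simp only [sc, if_neg hr, if_pos ht, if_neg hrt] at hcyc
  simp only [twistedDiag]
  generalize α (L d (r + t)) (L d (-(r + t))) = A at hcyc ⊢
  simp only [ip_add, ip_neg, neg_add, qsigma_add_left hQ0, qsigma_add_right hQ0,
    qsigma_neg_right hQ0, ht r] at hcyc ⊢
  have := qsigma_ne_zero hQ0 (Q := Q) r t
  have := qsigma_ne_zero hQ0 (Q := Q) t t
  linear_combination (norm := skip) (-(qsigma d Q r r * qsigma d Q r t * qsigma d Q t t)) * hcyc
  field_simp
  ring

lemma IsCocycle.ip_mul_twistedDiag_add_of_qsigma_ne (hQ0 : ∀ i j, Q i j ≠ 0)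
    (hα : IsCocycle d Q γ α) {t : Fin d → ℤ} (ht : t ∈ Rset d Q) (hγt : ip d γ t ≠ 0)
    {r s : Fin d → ℤ} (h : qsigma d Q r s ≠ qsigma d Q s r) :
    ip d γ r * twistedDiag Q α (r + s) = ip d γ (r + s) * twistedDiag Q α r := by
  have hr : r ∉ Rset d Q := fun hr => h (hr s)
  have h' : qsigma d Q (r + t) s ≠ qsigma d Q s (r + t) := by
    rw [qsigma_add_left hQ0, qsigma_add_right hQ0, ← ht s]
    exact fun e => h (mul_right_cancel₀ (qsigma_ne_zero hQ0 t s) e)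
  have e1 := hα.twistedDiag_add hQ0 h
  have e2 := hα.twistedDiag_add hQ0 h'
  have e3 := hα.ip_mul_twistedDiag_add_of_mem hQ0 hr ht
  have e4 := hα.ip_mul_twistedDiag_add_of_mem hQ0 (add_notMem_Rset_of_qsigma_ne hQ0 h) ht
  rw [add_right_comm] at e2
  rw [ip_add γ r t] at e3
  rw [ip_add γ (r + s) t] at e4
  refine mul_left_cancel₀ hγt ?_
  linear_combination (-ip d γ r) * e4 + ip d γ (r + s) * e3
    + (ip d γ r * ip d γ (r + s)) * (e2 - e1)

lemma IsCocycle.twistedDiag_div_ip_eq_of_qsigma_ne (hQ0 : ∀ i j, Q i j ≠ 0)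
    (hγ : Generic d γ) (hα : IsCocycle d Q γ α) {t : Fin d → ℤ} (ht : t ∈ Rset d Q)
    (ht0 : t ≠ 0) {x y : Fin d → ℤ} (h : qsigma d Q x y ≠ qsigma d Q y x) :
    twistedDiag Q α y / ip d γ y = twistedDiag Q α x / ip d γ x := by
  have hx : ip d γ x ≠ 0 := ip_ne_zero hγ fun hx => h (hx ▸ zero_mem_Rset y)
  have hy : ip d γ y ≠ 0 := ip_ne_zero hγ fun hy => h (hy ▸ zero_mem_Rset x).symm
  have h' : qsigma d Q x (y - x) ≠ qsigma d Q (y - x) x := by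
    rw [sub_eq_add_neg, qsigma_add_right hQ0, qsigma_add_left hQ0, qsigma_neg_right hQ0,
      qsigma_neg_left hQ0]
    exact fun e => h (mul_right_cancel₀ (inv_ne_zero (qsigma_ne_zero hQ0 x x)) e)
  have key := hα.ip_mul_twistedDiag_add_of_qsigma_ne hQ0 ht (ip_ne_zero hγ ht0) h'
  rw [add_sub_cancel] at key
  rw [div_eq_div_iff hy hx]
  linear_combination key

end Cocycle

section RationalNormalForm

variable {d : ℕ} {Q : Matrix (Fin d) (Fin d) ℂ} {z : ℕ} {k : Fin d → ℕ}

lemma qsigma_single_left (a : Fin d) (c : ℤ) (n : Fin d → ℤ) :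
    qsigma d Q (Pi.single a c) n = ∏ i, if i < a then Q a i ^ (c * n i) else 1 := by
  refine Finset.prod_congr rfl fun i _ => ?_
  rw [Finset.prod_eq_single a]
  · rw [Pi.single_eq_same]
  · intro j _ hj
    rw [Pi.single_eq_of_ne hj, zero_mul, zpow_zero, ite_self]
  · simp

lemma qsigma_single_right (m : Fin d → ℤ) (a : Fin d) (c : ℤ) :
    qsigma d Q m (Pi.single a c) = ∏ j, if a < j then Q j a ^ (m j * c) else 1 := by
  rw [qsigma, Finset.prod_eq_single a]
  · simp only [Pi.single_eq_same]
  · intro i _ hi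
    refine Finset.prod_eq_one fun j _ => ?_
    rw [Pi.single_eq_of_ne hi, mul_zero, zpow_zero, ite_self]
  · simp

lemma qsigma_single_zero_left (hd : 0 < d) (c : ℤ) (n : Fin d → ℤ) :
    qsigma d Q (Pi.single ⟨0, hd⟩ c) n = 1 := by
  rw [qsigma_single_left]
  exact Finset.prod_eq_one fun i _ => if_neg (Nat.not_lt_zero i)

lemma qsigma_single_one_left (hd : 0 < d) (hd1 : 1 < d) (c : ℤ) (n : Fin d → ℤ) :
    qsigma d Q (Pi.single ⟨1, hd1⟩ c) n = Q ⟨1, hd1⟩ ⟨0, hd⟩ ^ (c * n ⟨0, hd⟩) := by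
  rw [qsigma_single_left, Finset.prod_eq_single ⟨0, hd⟩]
  · exact if_pos Nat.zero_lt_one
  · intro i _ hi
    exact if_neg fun hlt => hi (Fin.ext (Nat.lt_one_iff.1 hlt))
  · simp

lemma IsRNF.apply_eq_one_of_lt_two_le (hRNF : IsRNF d Q z k) {i j : Fin d} (hi : i.val < 2)
    (hj : 2 ≤ j.val) : Q j i = 1 :=
  hRNF.2.2.1 j i <| by rintro ⟨l, -, h | h⟩ <;> omega

lemma IsRNF.qsigma_single_zero_right (hRNF : IsRNF d Q z k) (hd : 0 < d) (hd1 : 1 < d)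
    (m : Fin d → ℤ) (c : ℤ) :
    qsigma d Q m (Pi.single ⟨0, hd⟩ c) = Q ⟨1, hd1⟩ ⟨0, hd⟩ ^ (m ⟨1, hd1⟩ * c) := by
  rw [qsigma_single_right, Finset.prod_eq_single ⟨1, hd1⟩]
  · exact if_pos Nat.zero_lt_one
  · intro j _ hj
    split_ifs with hlt
    · have hj1 : j.val ≠ 1 := fun h => hj (Fin.ext h)
      have hj2 : 2 ≤ j.val := by
        rw [Fin.lt_def] at hlt
        omega
      rw [hRNF.apply_eq_one_of_lt_two_le Nat.zero_lt_two hj2, one_zpow]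
    · rfl
  · simp

lemma IsRNF.qsigma_single_one_right (hRNF : IsRNF d Q z k) (hd1 : 1 < d)
    (m : Fin d → ℤ) (c : ℤ) : qsigma d Q m (Pi.single ⟨1, hd1⟩ c) = 1 := by
  rw [qsigma_single_right]
  refine Finset.prod_eq_one fun j _ => ?_
  split_ifs with hlt
  · rw [hRNF.apply_eq_one_of_lt_two_le Nat.one_lt_two hlt, one_zpow]
  · rfl

lemma IsRNF.zpow_eq_one_iff_dvd (hRNF : IsRNF d Q z k) (hd : 0 < d) (hd1 : 1 < d) (c : ℤ) :
    Q ⟨1, hd1⟩ ⟨0, hd⟩ ^ c = 1 ↔ (k ⟨0, hd⟩ : ℤ) ∣ c := by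
  obtain ⟨hprim, hinv, -, -⟩ := hRNF.2.2.2.1 0 hRNF.1 hd hd1
  have hinv : Q ⟨1, hd1⟩ ⟨0, hd⟩ = (Q ⟨0, hd⟩ ⟨1, hd1⟩)⁻¹ := hinv
  rw [hinv, inv_zpow, inv_eq_one]
  exact hprim.zpow_eq_one_iff_dvd c

lemma IsRNF.not_dvd_one (hRNF : IsRNF d Q z k) (hd : 0 < d) (hd1 : 1 < d) :
    ¬ (k ⟨0, hd⟩ : ℤ) ∣ 1 := by
  have hk : 1 < k ⟨0, hd⟩ := (hRNF.2.2.2.1 0 hRNF.1 hd hd1).2.2.2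
  intro h
  have := Int.eq_one_of_dvd_one (Int.natCast_nonneg _) h
  omega

lemma IsRNF.k1e1_mem_Rset (hRNF : IsRNF d Q z k) (hd : 0 < d) (hd1 : 1 < d) :
    k1e1 d k hd ∈ Rset d Q := fun n => by
  rw [k1e1, qsigma_single_zero_left, hRNF.qsigma_single_zero_right hd hd1, eq_comm,
    hRNF.zpow_eq_one_iff_dvd hd hd1]
  exact dvd_mul_left _ _

lemma IsRNF.k1e1_ne_zero (hRNF : IsRNF d Q z k) (hd : 0 < d) (hd1 : 1 < d) :
    k1e1 d k hd ≠ 0 := by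
  have hk : 1 < k ⟨0, hd⟩ := (hRNF.2.2.2.1 0 hRNF.1 hd hd1).2.2.2
  rw [k1e1, Ne, Pi.single_eq_zero_iff]
  omega

theorem IsRNF.apply_eq_of_notMem_Rset {β : Type*} (hQ0 : ∀ i j, Q i j ≠ 0)
    (hRNF : IsRNF d Q z k) (hd : 0 < d) (hd1 : 1 < d) {H : (Fin d → ℤ) → β}
    (hH : ∀ x y, qsigma d Q x y ≠ qsigma d Q y x → H y = H x)
    {m : Fin d → ℤ} (hm : m ∉ Rset d Q) : H m = H (Pi.single ⟨0, hd⟩ 1) := by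
  have hdvd := hRNF.zpow_eq_one_iff_dvd hd hd1
  have h₀ (x : Fin d → ℤ) (hx : ¬ (k ⟨0, hd⟩ : ℤ) ∣ x ⟨1, hd1⟩) :
      H x = H (Pi.single ⟨0, hd⟩ 1) := by
    refine hH _ _ ?_
    rwa [qsigma_single_zero_left, hRNF.qsigma_single_zero_right hd hd1, mul_one, ne_comm,
      Ne, hdvd]
  have h₁ (x : Fin d → ℤ) (hx : x ⟨1, hd1⟩ = 1) : H x = H (Pi.single ⟨0, hd⟩ 1) :=
    h₀ x (hx ▸ hRNF.not_dvd_one hd hd1)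
  by_cases hm1 : (k ⟨0, hd⟩ : ℤ) ∣ m ⟨1, hd1⟩
  swap
  · exact h₀ m hm1
  by_cases hm0 : (k ⟨0, hd⟩ : ℤ) ∣ m ⟨0, hd⟩
  · -- as `k ⟨0, hd⟩ ∣ m ⟨0, hd⟩`, adding `Pi.single ⟨1, hd1⟩ c` keeps a witness of `m ∉ R`
    obtain ⟨n, hn⟩ : ∃ n, qsigma d Q m n ≠ qsigma d Q n m := by simpa [Rset] using hm
    set s := n + Pi.single ⟨1, hd1⟩ (1 - n ⟨1, hd1⟩)
    have hs : qsigma d Q m s ≠ qsigma d Q s m := by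
      rwa [qsigma_add_right hQ0, qsigma_add_left hQ0, hRNF.qsigma_single_one_right hd1,
        qsigma_single_one_left hd hd1, (hdvd _).2 (hm0.mul_left _), mul_one, mul_one]
    rw [← hH m s hs]
    exact h₁ s (by simp [s])
  · rw [← hH m (Pi.single ⟨1, hd1⟩ 1) ?_]
    · exact h₁ _ (by simp)
    rwa [hRNF.qsigma_single_one_right hd1, qsigma_single_one_left hd hd1, one_mul, ne_comm,
      Ne, hdvd]

end RationalNormalForm

end QTorus

open QTorus

theorem stmt16_general (d : ℕ) (hd1 : 1 < d) (hd : 0 < d)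
    (Q : Matrix (Fin d) (Fin d) ℂ) (hQ : QOk d Q)
    (z : ℕ) (k : Fin d → ℕ) (hRNF : IsRNF d Q z k)
    (γ : Fin d → ℂ) (hγ : Generic d γ)
    (α : g d →ₗ[ℂ] g d →ₗ[ℂ] ℂ) (hα : IsCocycle d Q γ α) :
    ∀ m : Fin d → ℤ, m ∉ Rset d Q →
      α (L d m) (L d (-m)) =
        (ip d γ m / ip d γ (Pi.single ⟨0, hd⟩ 1)) * qsigma d Q m (-m) *
          α (L d (Pi.single ⟨0, hd⟩ 1)) (L d (-(Pi.single ⟨0, hd⟩ 1))) := by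
  intro m hm
  have hQ0 := hQ.2.2
  have hratio := hRNF.apply_eq_of_notMem_Rset hQ0 hd hd1
    (H := fun x => twistedDiag Q α x / ip d γ x)
    (fun _ _ => hα.twistedDiag_div_ip_eq_of_qsigma_ne hQ0 hγ (hRNF.k1e1_mem_Rset hd hd1)
      (hRNF.k1e1_ne_zero hd hd1)) hm
  have hm0 : ip d γ m ≠ 0 := ip_ne_zero hγ fun h => hm (h ▸ zero_mem_Rset)
  simp only [twistedDiag, qsigma_single_zero_left, one_mul] at hratio
  have hσ := qsigma_ne_zero hQ0 m m
  calc α (L d m) (L d (-m))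
      = (qsigma d Q m m)⁻¹ * ip d γ m * (qsigma d Q m m * α (L d m) (L d (-m)) / ip d γ m) := by
        field_simp
    _ = _ := by rw [hratio, qsigma_neg_right hQ0]; ring

/-- for Q in rational normal form, γ generic, and α a normalized
2-cocycle, writing α(m) = α(L_m, L_{-m}): for every m ∉ R,
α(m) = ((γ|m)/(γ|e₁)) σ(m,−m) α(e₁). -/
theorem stmt16 (d : ℕ) (hd1 : 1 < d) (hd : 0 < d)
    (Q : Matrix (Fin d) (Fin d) ℂ) (hQ : QOk d Q)
    (z : ℕ) (k : Fin d → ℕ) (hRNF : IsRNF d Q z k)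
    (γ : Fin d → ℂ) (hγ : Generic d γ)
    (α : g d →ₗ[ℂ] g d →ₗ[ℂ] ℂ) (hα : IsCocycle d Q γ α)
    (hnorm : IsNormalized d Q k hd α) :
    ∀ m : Fin d → ℤ, m ∉ Rset d Q →
      α (L d m) (L d (-m)) =
        (ip d γ m / ip d γ (Pi.single ⟨0, hd⟩ 1)) * qsigma d Q m (-m) *
          α (L d (Pi.single ⟨0, hd⟩ 1)) (L d (-(Pi.single ⟨0, hd⟩ 1))) :=
  stmt16_general d hd1 hd Q hQ z k hRNF γ hγ α hα
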